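/- Let λ₀ > 0 and η > 0. Define F(z) = 1 + (z²/(λ₀² - z²))·(4η/(1+η)²). Then for every complex z with Im z > 0 and z² ≠ λ₀², one has Im(z·F(z)) ≥ 0. -/

import Mathlib

open Complex

theorem herglotz_condition_single_pair
    (lam0 : ℝ) (hlam0 : 0 < lam0) (eta : ℝ) (heta : 0 < eta)
    (F : ℂ → ℂ)
    (hF : F = fun z => 1 + (z ^ 2 / ((lam0 : ℂ) ^ 2 - z ^ 2))
        * (((4 * eta / (1 + eta) ^ 2 : ℝ)) : ℂ))
    (z : ℂ) (hz : 0 < z.im) (hz2 : z ^ 2 ≠ (lam0 : ℂ) ^ 2) :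
    0 ≤ (z * F z).im := by
  set c : ℝ := 4 * eta / (1 + eta) ^ 2 with hc
  have hden : (0:ℝ) < (1 + eta) ^ 2 := by positivity
  have hc0 : 0 ≤ c := by positivity
  have hc1 : c ≤ 1 := by
    rw [hc, div_le_one hden]; nlinarith [sq_nonneg (1 - eta)]
  set w1 : ℂ := (lam0 : ℂ) - z with hw1def
  set w2 : ℂ := (lam0 : ℂ) + z with hw2def
  have hw1 : w1 ≠ 0 := by
    intro h
    have : w1.im = 0 := by rw [h]; simp
    simp [hw1def] at this
    linarith
  have hw2 : w2 ≠ 0 := by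
    intro h
    have : w2.im = 0 := by rw [h]; simp
    simp [hw2def] at this
    linarith
  have hsub : (lam0 : ℂ) ^ 2 - z ^ 2 ≠ 0 := sub_ne_zero.mpr (Ne.symm hz2)
  have key : z * F z = ((1 - c : ℝ) : ℂ) * z
      + ((c * lam0 ^ 2 / 2 : ℝ) : ℂ) * (w1⁻¹ - w2⁻¹) := by
    rw [hF]
    simp only [hw1def, hw2def]
    push_cast
    have hw1' : -z + (lam0:ℂ) ≠ 0 := by rw [neg_add_eq_sub]; exact hw1
    have hw2' : z + (lam0:ℂ) ≠ 0 := by rw [add_comm]; exact hw2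
    have hw1'' : (lam0:ℂ) - z ≠ 0 := hw1
    have hw2'' : (lam0:ℂ) + z ≠ 0 := hw2
    field_simp [hw1', hw2', hw1'', hw2'']
    ring
  rw [key]
  have him1 : w1.im = -z.im := by simp [hw1def]
  have him2 : w2.im = z.im := by simp [hw2def]
  simp only [Complex.add_im, Complex.mul_im, Complex.sub_im, Complex.inv_im,
    Complex.ofReal_im, Complex.ofReal_re, Complex.sub_re, Complex.inv_re,
    zero_mul, add_zero, zero_add, mul_zero, him1, him2]
  have h1 : (0:ℝ) < Complex.normSq w1 := Complex.normSq_pos.mpr hw1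
  have h2 : (0:ℝ) < Complex.normSq w2 := Complex.normSq_pos.mpr hw2
  have e1 : -(-z.im) / Complex.normSq w1 = z.im / Complex.normSq w1 := by ring
  have t1 : (0:ℝ) ≤ (1 - c) * z.im := by
    have : 0 ≤ 1 - c := by linarith
    positivity
  have t2 : (0:ℝ) ≤ z.im / Complex.normSq w1 := by positivity
  have t3 : (0:ℝ) ≤ z.im / Complex.normSq w2 := by positivity
  have t4 : (0:ℝ) ≤ c * lam0 ^ 2 / 2 := by positivity
  have e2 : (- -z.im / Complex.normSq w1 - -z.im / Complex.normSq w2)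
      = z.im / Complex.normSq w1 + z.im / Complex.normSq w2 := by ring
  rw [e2]
  have := mul_nonneg t4 (add_nonneg t2 t3)
  linarith
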